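/- Every directed path a in Z satisfies exactly one of the following four conditions, where 'below Q₁' means a₂(t) ≤ 1/5 whenever a₁(t) ∈ (1/5, 2/5), 'above Q₁' means a₂(t) ≥ 2/5 whenever a₁(t) ∈ (1/5, 2/5), 'below Q₂' means a₂(t) ≤ 3/5 whenever a₁(t) ∈ (3/5, 4/5), and 'above Q₂' means a₂(t) ≥ 4/5 whenever a₁(t) ∈ (3/5, 4/5): (below Q₁ and below Q₂), (below Q₁ and above Q₂), (above Q₁ and below Q₂), (above Q₁ and above Q₂); moreover each of the four conditions is realized by some directed path in Z. (The four-fold classification underlying the computation in 2.2(b) that the fundamental category of the space with two consecutive obstructions has exactly four arrows 0 → 1.) -/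
import Mathlib


open Set

/-- A directed path in `[0,1]²` avoiding `Q`, with nondecreasing coordinates,
from `(0,0)` to `(1,1)`. -/
def DiPath (Q : Set (ℝ × ℝ)) (a : ℝ → ℝ × ℝ) : Prop :=
  ContinuousOn a (Icc 0 1) ∧
  (∀ t ∈ Icc (0:ℝ) 1, a t ∈ Icc (0:ℝ) 1 ×ˢ Icc (0:ℝ) 1) ∧
  (∀ t ∈ Icc (0:ℝ) 1, a t ∉ Q) ∧
  MonotoneOn (fun t => (a t).1) (Icc 0 1) ∧
  MonotoneOn (fun t => (a t).2) (Icc 0 1) ∧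
  a 0 = (0, 0) ∧ a 1 = (1, 1)

/-- The first consecutive obstruction `Q₁ = (1/5, 2/5) × (1/5, 2/5)`. -/
def Q1 : Set (ℝ × ℝ) := Ioo (1/5 : ℝ) (2/5) ×ˢ Ioo (1/5 : ℝ) (2/5)

/-- The second consecutive obstruction `Q₂ = (3/5, 4/5) × (3/5, 4/5)`. -/
def Q2 : Set (ℝ × ℝ) := Ioo (3/5 : ℝ) (4/5) ×ˢ Ioo (3/5 : ℝ) (4/5)

/-- `a` passes below `Q₁`. -/
def BelowQ1 (a : ℝ → ℝ × ℝ) : Prop :=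
  ∀ t ∈ Icc (0:ℝ) 1, (a t).1 ∈ Ioo (1/5 : ℝ) (2/5) → (a t).2 ≤ 1/5

/-- `a` passes above `Q₁`. -/
def AboveQ1 (a : ℝ → ℝ × ℝ) : Prop :=
  ∀ t ∈ Icc (0:ℝ) 1, (a t).1 ∈ Ioo (1/5 : ℝ) (2/5) → (a t).2 ≥ 2/5

/-- `a` passes below `Q₂`. -/
def BelowQ2 (a : ℝ → ℝ × ℝ) : Prop :=
  ∀ t ∈ Icc (0:ℝ) 1, (a t).1 ∈ Ioo (3/5 : ℝ) (4/5) → (a t).2 ≤ 3/5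

/-- `a` passes above `Q₂`. -/
def AboveQ2 (a : ℝ → ℝ × ℝ) : Prop :=
  ∀ t ∈ Icc (0:ℝ) 1, (a t).1 ∈ Ioo (3/5 : ℝ) (4/5) → (a t).2 ≥ 4/5

section Aux

/-- Dichotomy: a directed path avoiding the open square `(l,u) × (l,u)` is entirely
below or entirely above it (while over the strip). -/
lemma diPath_dichotomy (a : ℝ → ℝ × ℝ) (l u : ℝ) (hlu : l < u)
    (hcont : ContinuousOn a (Icc 0 1))
    (hmono1 : MonotoneOn (fun t => (a t).1) (Icc 0 1))
    (hmono2 : MonotoneOn (fun t => (a t).2) (Icc 0 1))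
    (hQ : ∀ t ∈ Icc (0:ℝ) 1, (a t).1 ∈ Ioo l u → (a t).2 ∉ Ioo l u) :
    (∀ t ∈ Icc (0:ℝ) 1, (a t).1 ∈ Ioo l u → (a t).2 ≤ l) ∨
    (∀ t ∈ Icc (0:ℝ) 1, (a t).1 ∈ Ioo l u → (a t).2 ≥ u) := by
  by_contra h
  push_neg at h
  obtain ⟨⟨s, hs, hs1, hs2⟩, t, ht, ht1, ht2⟩ := h
  -- a₂ s > l and a₂ s ∉ (l,u), so a₂ s ≥ u
  have hsu : (a s).2 ≥ u := by
    have := hQ s hs hs1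
    simp only [mem_Ioo, not_and, not_lt] at this
    exact this hs2
  have htl : (a t).2 ≤ l := by
    have := hQ t ht ht1
    simp only [mem_Ioo, not_and, not_lt] at this
    by_contra hc
    push_neg at hc
    have := this hc
    linarith
  have hts : t ≤ s := by
    by_contra hc
    push_neg at hc
    have := hmono2 hs ht hc.le
    simp only at this
    linarith
  -- IVT for the second coordinate on [t, s]
  have hsub : Icc t s ⊆ Icc (0:ℝ) 1 := Icc_subset_Icc ht.1 hs.2
  have hc2 : ContinuousOn (fun r => (a r).2) (Icc t s) :=
    (continuousOn_snd.comp hcont (mapsTo_image _ _)).mono hsub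
  have hmid : (l + u) / 2 ∈ Icc ((a t).2) ((a s).2) :=
    ⟨by linarith, by linarith⟩
  obtain ⟨r, hr, hr2⟩ := intermediate_value_Icc hts hc2 hmid
  have hr01 : r ∈ Icc (0:ℝ) 1 := hsub hr
  have hr1 : (a r).1 ∈ Ioo l u := by
    have h1 := hmono1 ht hr01 hr.1
    have h2 := hmono1 hr01 hs hr.2
    simp only at h1 h2
    exact ⟨lt_of_lt_of_le ht1.1 h1, lt_of_le_of_lt h2 hs1.2⟩
  have := hQ r hr01 hr1
  simp only [hr2, mem_Ioo] at this
  exact this ⟨by linarith, by linarith⟩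

/-- The first coordinate of a directed path attains every value in `[0,1]`. -/
lemma diPath_exists_mid (a : ℝ → ℝ × ℝ)
    (hcont : ContinuousOn a (Icc 0 1)) (h0 : a 0 = (0, 0)) (h1 : a 1 = (1, 1))
    (m : ℝ) (hm : m ∈ Icc (0:ℝ) 1) : ∃ t ∈ Icc (0:ℝ) 1, (a t).1 = m := by
  have hc1 : ContinuousOn (fun r => (a r).1) (Icc 0 1) :=
    continuousOn_fst.comp hcont (mapsTo_image _ _)
  have := intermediate_value_Icc (le_of_lt one_pos) hc1
  have hm' : m ∈ Icc ((a 0).1) ((a 1).1) := by rw [h0, h1]; exact hm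
  obtain ⟨r, hr, hr1⟩ := this hm'
  exact ⟨r, hr, hr1⟩

/-- below-and-above (same square) is impossible. -/
lemma not_below_above (a : ℝ → ℝ × ℝ) (l u : ℝ) (hl : 0 ≤ l) (hu : u ≤ 1) (hlu : l < u)
    (hcont : ContinuousOn a (Icc 0 1)) (h0 : a 0 = (0, 0)) (h1 : a 1 = (1, 1))
    (hb : ∀ t ∈ Icc (0:ℝ) 1, (a t).1 ∈ Ioo l u → (a t).2 ≤ l)
    (ha : ∀ t ∈ Icc (0:ℝ) 1, (a t).1 ∈ Ioo l u → (a t).2 ≥ u) : False := by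
  obtain ⟨t, ht, htm⟩ := diPath_exists_mid a hcont h0 h1 ((l + u) / 2)
    ⟨by linarith, by linarith⟩
  have hmem : (a t).1 ∈ Ioo l u := by rw [htm]; exact ⟨by linarith, by linarith⟩
  have := hb t ht hmem
  have := ha t ht hmem
  linarith

/-- The low path: along the bottom then up the right edge. -/
noncomputable def pLL : ℝ → ℝ × ℝ := fun t => (min (2*t) 1, max (2*t - 1) 0)

/-- The high path: up the left edge then along the top. -/
noncomputable def pHH : ℝ → ℝ × ℝ := fun t => (max (2*t - 1) 0, min (2*t) 1)

/-- Below `Q₁`, above `Q₂`: through `(1/2,0)`, `(1/2,1)`. -/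
noncomputable def pLH : ℝ → ℝ × ℝ :=
  fun t => (max (min (3*t/2) (1/2)) ((3*t - 1)/2), min (max (3*t - 1) 0) 1)

/-- Above `Q₁`, below `Q₂`: through `(0,1/2)`, `(1,1/2)`. -/
noncomputable def pHL : ℝ → ℝ × ℝ :=
  fun t => (min (max (3*t - 1) 0) 1, max (min (3*t/2) (1/2)) ((3*t - 1)/2))

lemma mono2t : Monotone fun t : ℝ => 2*t := fun x y h => by dsimp only; linarith
lemma mono2t1 : Monotone fun t : ℝ => 2*t - 1 := fun x y h => by dsimp only; linarith
lemma mono3t2 : Monotone fun t : ℝ => 3*t/2 := fun x y h => by dsimp only; linarith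
lemma mono3t1 : Monotone fun t : ℝ => 3*t - 1 := fun x y h => by dsimp only; linarith

lemma pLL_key (t : ℝ) : 0 < (pLL t).2 → (pLL t).1 = 1 := by
  simp only [pLL]
  intro h
  have h1 : (1:ℝ) < 2 * t := by
    rcases le_or_gt (2*t - 1) 0 with hc | hc
    · rw [max_eq_right hc] at h; linarith
    · linarith
  rw [min_eq_right h1.le]

lemma pHH_key (t : ℝ) : 0 < (pHH t).1 → (pHH t).2 = 1 := by
  simpa [pHH, pLL] using pLL_key t

lemma pLH_key0 (t : ℝ) : (pLH t).1 < 1/2 → (pLH t).2 = 0 := by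
  simp only [pLH]
  intro h
  have h1 : 3*t/2 < 1/2 := by
    rcases min_lt_iff.mp (lt_of_le_of_lt (le_max_left _ _) h) with hc | hc
    · exact hc
    · linarith
  have h2 : 3*t - 1 ≤ 0 := by linarith
  rw [max_eq_right h2, min_eq_left (by norm_num : (0:ℝ) ≤ 1)]

lemma pLH_key1 (t : ℝ) : 1/2 < (pLH t).1 → (pLH t).2 = 1 := by
  simp only [pLH]
  intro h
  have h1 : 1/2 < (3*t - 1)/2 := by
    rcases lt_max_iff.mp h with hc | hc
    · exact absurd (lt_of_lt_of_le hc (min_le_right _ _)) (lt_irrefl _)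
    · exact hc
  rw [max_eq_left (by linarith), min_eq_right (by linarith : (1:ℝ) ≤ 3*t - 1)]

lemma pLL_spec : DiPath (Q1 ∪ Q2) pLL ∧ BelowQ1 pLL ∧ BelowQ2 pLL := by
  have hkey := pLL_key
  have hmono1 : Monotone (fun t => (pLL t).1) :=
    mono2t.min monotone_const
  have hmono2 : Monotone (fun t => (pLL t).2) :=
    mono2t1.max monotone_const
  have hbelow1 : BelowQ1 pLL := by
    intro t _ hx
    by_contra hc
    push_neg at hc
    have := hkey t (by linarith)
    simp only [this] at hx
    exact absurd hx.2 (by norm_num)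
  have hbelow2 : BelowQ2 pLL := by
    intro t _ hx
    by_contra hc
    push_neg at hc
    have := hkey t (by linarith)
    simp only [this] at hx
    exact absurd hx.2 (by norm_num)
  refine ⟨⟨?_, ?_, ?_, hmono1.monotoneOn _, hmono2.monotoneOn _, ?_, ?_⟩,
    hbelow1, hbelow2⟩
  · exact (((continuous_const.mul continuous_id).min continuous_const).prodMk
      (((continuous_const.mul continuous_id).sub continuous_const).max
        continuous_const)).continuousOn
  · intro t ht
    simp only [pLL, mem_prod, mem_Icc]
    constructor
    · exact ⟨le_min (by linarith [ht.1]) one_pos.le, min_le_right _ _⟩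
    · exact ⟨le_max_right _ _, max_le (by linarith [ht.2]) one_pos.le⟩
  · intro t ht hmem
    rcases hmem with hm | hm
    · obtain ⟨hx, hy⟩ := hm
      simp only [Q1, mem_Ioo] at hx hy
      have := hkey t (by linarith [hy.1])
      rw [this] at hx
      exact absurd hx.2 (by norm_num)
    · obtain ⟨hx, hy⟩ := hm
      simp only [Q2, mem_Ioo] at hx hy
      have := hkey t (by linarith [hy.1])
      rw [this] at hx
      exact absurd hx.2 (by norm_num)
  · simp [pLL]
  · norm_num [pLL]

lemma pHH_spec : DiPath (Q1 ∪ Q2) pHH ∧ AboveQ1 pHH ∧ AboveQ2 pHH := by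
  have hkey := pHH_key
  have hmono1 : Monotone (fun t => (pHH t).1) :=
    mono2t1.max monotone_const
  have hmono2 : Monotone (fun t => (pHH t).2) :=
    mono2t.min monotone_const
  have habove1 : AboveQ1 pHH := by
    intro t _ hx
    have := hkey t (by linarith [hx.1])
    rw [this]; norm_num
  have habove2 : AboveQ2 pHH := by
    intro t _ hx
    have := hkey t (by linarith [hx.1])
    rw [this]; norm_num
  refine ⟨⟨?_, ?_, ?_, hmono1.monotoneOn _, hmono2.monotoneOn _, ?_, ?_⟩,
    habove1, habove2⟩
  · exact ((((continuous_const.mul continuous_id).sub continuous_const).max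
      continuous_const).prodMk
      ((continuous_const.mul continuous_id).min continuous_const)).continuousOn
  · intro t ht
    simp only [pHH, mem_prod, mem_Icc]
    constructor
    · exact ⟨le_max_right _ _, max_le (by linarith [ht.2]) one_pos.le⟩
    · exact ⟨le_min (by linarith [ht.1]) one_pos.le, min_le_right _ _⟩
  · intro t ht hmem
    rcases hmem with hm | hm
    · obtain ⟨hx, hy⟩ := hm
      simp only [Q1, mem_Ioo] at hx hy
      have := hkey t (by linarith [hx.1])
      rw [this] at hy
      exact absurd hy.2 (by norm_num)
    · obtain ⟨hx, hy⟩ := hm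
      simp only [Q2, mem_Ioo] at hx hy
      have := hkey t (by linarith [hx.1])
      rw [this] at hy
      exact absurd hy.2 (by norm_num)
  · norm_num [pHH]
  · norm_num [pHH]

lemma pLH_spec : DiPath (Q1 ∪ Q2) pLH ∧ BelowQ1 pLH ∧ AboveQ2 pLH := by
  have hmono1 : Monotone (fun t => (pLH t).1) :=
    (mono3t2.min
      monotone_const).max (fun x y h => by linarith)
  have hmono2 : Monotone (fun t => (pLH t).2) :=
    (mono3t1.max
      monotone_const).min monotone_const
  have hbelow1 : BelowQ1 pLH := by
    intro t _ hx
    have := pLH_key0 t (by linarith [hx.2])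
    rw [this]; norm_num
  have habove2 : AboveQ2 pLH := by
    intro t _ hx
    have := pLH_key1 t (by linarith [hx.1])
    rw [this]; norm_num
  refine ⟨⟨?_, ?_, ?_, hmono1.monotoneOn _, hmono2.monotoneOn _, ?_, ?_⟩,
    hbelow1, habove2⟩
  · exact (((((continuous_const.mul continuous_id).div_const 2).min
      continuous_const).max
      (((continuous_const.mul continuous_id).sub continuous_const).div_const 2)).prodMk
      ((((continuous_const.mul continuous_id).sub continuous_const).max
        continuous_const).min continuous_const)).continuousOn
  · intro t ht
    simp only [pLH, mem_prod, mem_Icc]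
    constructor
    · constructor
      · exact le_max_of_le_left (le_min (by linarith [ht.1]) (by norm_num))
      · exact max_le (min_le_right _ _ |>.trans (by norm_num))
          (by linarith [ht.2])
    · exact ⟨le_min (le_max_right _ _) one_pos.le, min_le_right _ _⟩
  · intro t ht hmem
    rcases hmem with hm | hm
    · obtain ⟨hx, hy⟩ := hm
      simp only [Q1, mem_Ioo] at hx hy
      have := pLH_key0 t (by linarith [hx.2])
      rw [this] at hy
      exact absurd hy.1 (by norm_num)
    · obtain ⟨hx, hy⟩ := hm
      simp only [Q2, mem_Ioo] at hx hy
      have := pLH_key1 t (by linarith [hx.1])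
      rw [this] at hy
      exact absurd hy.2 (by norm_num)
  · norm_num [pLH]
  · norm_num [pLH]

lemma pHL_spec : DiPath (Q1 ∪ Q2) pHL ∧ AboveQ1 pHL ∧ BelowQ2 pHL := by
  have hswap : ∀ t, pHL t = ((pLH t).2, (pLH t).1) := fun t => rfl
  have hmono1 : Monotone (fun t => (pHL t).1) :=
    (mono3t1.max
      monotone_const).min monotone_const
  have hmono2 : Monotone (fun t => (pHL t).2) :=
    (mono3t2.min
      monotone_const).max (fun x y h => by linarith)
  have habove1 : AboveQ1 pHL := by
    intro t _ hx
    rw [hswap] at hx ⊢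
    try dsimp at hx ⊢
    by_contra hc
    push_neg at hc
    have := pLH_key0 t (by linarith)
    rw [this] at hx
    exact absurd hx.1 (by norm_num)
  have hbelow2 : BelowQ2 pHL := by
    intro t _ hx
    rw [hswap] at hx ⊢
    try dsimp at hx ⊢
    by_contra hc
    push_neg at hc
    have := pLH_key1 t (by linarith)
    rw [this] at hx
    exact absurd hx.2 (by norm_num)
  refine ⟨⟨?_, ?_, ?_, hmono1.monotoneOn _, hmono2.monotoneOn _, ?_, ?_⟩,
    habove1, hbelow2⟩
  · exact ((((((continuous_const.mul continuous_id).sub continuous_const).max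
        continuous_const).min continuous_const)).prodMk
      ((((continuous_const.mul continuous_id).div_const 2).min
      continuous_const).max
      (((continuous_const.mul continuous_id).sub continuous_const).div_const 2))).continuousOn
  · intro t ht
    simp only [pHL, mem_prod, mem_Icc]
    constructor
    · exact ⟨le_min (le_max_right _ _) one_pos.le, min_le_right _ _⟩
    · constructor
      · exact le_max_of_le_left (le_min (by linarith [ht.1]) (by norm_num))
      · exact max_le (min_le_right _ _ |>.trans (by norm_num))
          (by linarith [ht.2])
  · intro t ht hmem
    rcases hmem with hm | hm
    · obtain ⟨hx, hy⟩ := hm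
      rw [hswap] at hx hy
      try dsimp at hx hy
      simp only [Q1, mem_Ioo] at hx hy
      have := pLH_key0 t (by linarith [hy.2])
      rw [this] at hx
      exact absurd hx.1 (by norm_num)
    · obtain ⟨hx, hy⟩ := hm
      rw [hswap] at hx hy
      try dsimp at hx hy
      simp only [Q2, mem_Ioo] at hx hy
      have := pLH_key1 t (by linarith [hy.1])
      rw [this] at hx
      exact absurd hx.2 (by norm_num)
  · norm_num [pHL]
  · norm_num [pHL]

end Aux

/-- Every directed path in `Z = [0,1]² \ (Q₁ ∪ Q₂)` satisfies exactly one of the four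
conditions (below/above `Q₁`) × (below/above `Q₂`), and each of the four conditions is
realized by some directed path in `Z`. (The four-fold classification underlying the
computation in 2.2(b): the fundamental category of the space with two consecutive
obstructions has exactly four arrows `0 → 1`.) -/
theorem diPath_consecutive_four_classes :
    (∀ a : ℝ → ℝ × ℝ, DiPath (Q1 ∪ Q2) a →
      ((BelowQ1 a ∧ BelowQ2 a) ∧ ¬ (BelowQ1 a ∧ AboveQ2 a) ∧
        ¬ (AboveQ1 a ∧ BelowQ2 a) ∧ ¬ (AboveQ1 a ∧ AboveQ2 a)) ∨
      ((BelowQ1 a ∧ AboveQ2 a) ∧ ¬ (BelowQ1 a ∧ BelowQ2 a) ∧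
        ¬ (AboveQ1 a ∧ BelowQ2 a) ∧ ¬ (AboveQ1 a ∧ AboveQ2 a)) ∨
      ((AboveQ1 a ∧ BelowQ2 a) ∧ ¬ (BelowQ1 a ∧ BelowQ2 a) ∧
        ¬ (BelowQ1 a ∧ AboveQ2 a) ∧ ¬ (AboveQ1 a ∧ AboveQ2 a)) ∨
      ((AboveQ1 a ∧ AboveQ2 a) ∧ ¬ (BelowQ1 a ∧ BelowQ2 a) ∧
        ¬ (BelowQ1 a ∧ AboveQ2 a) ∧ ¬ (AboveQ1 a ∧ BelowQ2 a))) ∧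
    (∃ a, DiPath (Q1 ∪ Q2) a ∧ BelowQ1 a ∧ BelowQ2 a) ∧
    (∃ a, DiPath (Q1 ∪ Q2) a ∧ BelowQ1 a ∧ AboveQ2 a) ∧
    (∃ a, DiPath (Q1 ∪ Q2) a ∧ AboveQ1 a ∧ BelowQ2 a) ∧
    (∃ a, DiPath (Q1 ∪ Q2) a ∧ AboveQ1 a ∧ AboveQ2 a) := by
  refine ⟨?_, ⟨pLL, pLL_spec.1, pLL_spec.2⟩, ⟨pLH, pLH_spec.1, pLH_spec.2⟩,
    ⟨pHL, pHL_spec.1, pHL_spec.2⟩, ⟨pHH, pHH_spec.1, pHH_spec.2⟩⟩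
  intro a ha
  obtain ⟨hcont, hmem, havoid, hm1, hm2, h0, h1⟩ := ha
  have hQ1 : ∀ t ∈ Icc (0:ℝ) 1, (a t).1 ∈ Ioo (1/5:ℝ) (2/5) →
      (a t).2 ∉ Ioo (1/5:ℝ) (2/5) := fun t ht hx hy =>
    havoid t ht (Or.inl ⟨hx, hy⟩)
  have hQ2 : ∀ t ∈ Icc (0:ℝ) 1, (a t).1 ∈ Ioo (3/5:ℝ) (4/5) →
      (a t).2 ∉ Ioo (3/5:ℝ) (4/5) := fun t ht hx hy =>
    havoid t ht (Or.inr ⟨hx, hy⟩)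
  have d1 : BelowQ1 a ∨ AboveQ1 a :=
    diPath_dichotomy a (1/5) (2/5) (by norm_num) hcont hm1 hm2 hQ1
  have d2 : BelowQ2 a ∨ AboveQ2 a :=
    diPath_dichotomy a (3/5) (4/5) (by norm_num) hcont hm1 hm2 hQ2
  have n1 : ¬ (BelowQ1 a ∧ AboveQ1 a) := fun h =>
    not_below_above a (1/5) (2/5) (by norm_num) (by norm_num) (by norm_num)
      hcont h0 h1 h.1 h.2
  have n2 : ¬ (BelowQ2 a ∧ AboveQ2 a) := fun h =>
    not_below_above a (3/5) (4/5) (by norm_num) (by norm_num) (by norm_num)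
      hcont h0 h1 h.1 h.2
  rcases d1 with h1' | h1' <;> rcases d2 with h2' | h2'
  · exact Or.inl ⟨⟨h1', h2'⟩, fun h => n2 ⟨h2', h.2⟩, fun h => n1 ⟨h1', h.1⟩,
      fun h => n1 ⟨h1', h.1⟩⟩
  · exact Or.inr (Or.inl ⟨⟨h1', h2'⟩, fun h => n2 ⟨h.2, h2'⟩, fun h => n1 ⟨h1', h.1⟩,
      fun h => n1 ⟨h1', h.1⟩⟩)
  · exact Or.inr (Or.inr (Or.inl ⟨⟨h1', h2'⟩, fun h => n1 ⟨h.1, h1'⟩,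
      fun h => n1 ⟨h.1, h1'⟩, fun h => n2 ⟨h2', h.2⟩⟩))
  · exact Or.inr (Or.inr (Or.inr ⟨⟨h1', h2'⟩, fun h => n1 ⟨h.1, h1'⟩,
      fun h => n1 ⟨h.1, h1'⟩, fun h => n2 ⟨h.2, h2'⟩⟩))
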